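/- The special orthogonal group of the lattice M of symmetric matrices (A,B;B,C) with NA, B, C ∈ ℤ, equipped with the quadratic form (v,v) = −2N·det(v), acting by v ↦ XvXᵗ, is exactly Γ₀(N)* (the extension of Γ₀(N) by all Atkin–Lehner involutions). -/

import Mathlib

/-- The lattice `M` of symmetric matrices `(A,B;B,C)` with `NA, B, C ∈ ℤ`,
inside the real quadratic space of symmetric `2×2` matrices with
`(v,v) = −2N·det v`. -/
def LatticeM (N : ℕ) : Set (Matrix (Fin 2) (Fin 2) ℝ) :=
  {v | v 1 0 = v 0 1 ∧
    ∃ a b c : ℤ, v 0 0 = (a : ℝ) / N ∧ v 0 1 = (b : ℝ) ∧ v 1 1 = (c : ℝ)}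

/-- The image of `Γ₀(N)` in `SL₂(ℝ)`: integral matrices of determinant one whose
lower-left entry is divisible by `N`. -/
def Gamma0InSLR (N : ℕ) : Set (Matrix.SpecialLinearGroup (Fin 2) ℝ) :=
  {X | ∃ a b c d : ℤ, (N : ℤ) ∣ c ∧
    X.1 0 0 = (a : ℝ) ∧ X.1 0 1 = (b : ℝ) ∧ X.1 1 0 = (c : ℝ) ∧ X.1 1 1 = (d : ℝ)}

/-- The set of Atkin–Lehner involutions `W_e`, `e ∥ N`, in `SL₂(ℝ)`: matrices
`(1/√e)(ex, y; Nz, ew)` with `x, y, z, w ∈ ℤ` and `xwe − yzN/e = 1`. -/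
def AtkinLehnerSet (N : ℕ) : Set (Matrix.SpecialLinearGroup (Fin 2) ℝ) :=
  {X | ∃ e x y z w : ℤ, 0 < e ∧ e ∣ (N : ℤ) ∧ IsCoprime e ((N : ℤ) / e) ∧
    x * w * e - y * z * ((N : ℤ) / e) = 1 ∧
    X.1 0 0 = (e * x : ℤ) / Real.sqrt e ∧ X.1 0 1 = (y : ℤ) / Real.sqrt e ∧
    X.1 1 0 = ((N : ℤ) * z : ℤ) / Real.sqrt e ∧ X.1 1 1 = (e * w : ℤ) / Real.sqrt e}

/-- `Γ₀(N)*`, the subgroup of `SL₂(ℝ)` generated by `Γ₀(N)` and all Atkin–Lehner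
involutions `W_e` for `e ∥ N`. -/
def Gamma0Star (N : ℕ) : Subgroup (Matrix.SpecialLinearGroup (Fin 2) ℝ) :=
  Subgroup.closure (Gamma0InSLR N ∪ AtkinLehnerSet N)

/-! An Atkin–Lehner matrix `W_e` is `1/√e` times an integral matrix, with `e ∥ N`, and a direct
computation shows that it maps `M` into itself; since `Γ₀(N)` consists of the `W_1`, all of
`Γ₀(N)*` stabilises `M`.

Conversely, let `X = (a b; c d)` map `M` into itself. The images of `diag(1/N, 0)` and `diag(0, 1)`
make `a², ac/N, c²/N, Nb², bd, d²` integers, and then `ad - bc = 1` makes `ab, cd/N, ad` integers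
too. If `a ≠ 0`, let `x = gcd(ab, ac/N, ad)`. As `x ∣ ad`, it is prime to `ad - 1`, so
`x² ∣ a²(ad - 1) = N · ab · (ac/N)` gives `a² = e x²`; a Bézout relation for `x` shows `e ∣ N`, and
`X = W_e` with `a = ±x√e`. If `a = 0`, then `(1 1; 0 1) X` has upper left entry `c ≠ 0`. -/

open Matrix

section Lattice

variable {N : ℕ}

def PreservesLatticeM (N : ℕ) (Y : Matrix (Fin 2) (Fin 2) ℝ) : Prop :=
  ∀ v ∈ LatticeM N, Y * v * Yᵀ ∈ LatticeM N

theorem mul_mul_transpose_apply_fin_two (Y v : Matrix (Fin 2) (Fin 2) ℝ) (i j : Fin 2) :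
    (Y * v * Yᵀ) i j = Y i 0 * v 0 0 * Y j 0 + Y i 0 * v 0 1 * Y j 1 +
      Y i 1 * v 1 0 * Y j 0 + Y i 1 * v 1 1 * Y j 1 := by
  simp only [mul_apply, Fin.sum_univ_two, transpose_apply]
  ring

theorem PreservesLatticeM.mul {Y Z : Matrix (Fin 2) (Fin 2) ℝ} (hY : PreservesLatticeM N Y)
    (hZ : PreservesLatticeM N Z) : PreservesLatticeM N (Y * Z) := fun v hv => by
  simpa only [transpose_mul, Matrix.mul_assoc] using hY _ (hZ v hv)

theorem PreservesLatticeM.integrality (hN : 0 < N) {Y : Matrix (Fin 2) (Fin 2) ℝ}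
    (hY : PreservesLatticeM N Y) :
    (∃ k : ℤ, Y 0 0 * Y 0 0 = k) ∧ (∃ k : ℤ, Y 0 0 * Y 1 0 / N = k) ∧
      (∃ k : ℤ, Y 1 0 * Y 1 0 / N = k) ∧ (∃ k : ℤ, N * (Y 0 1 * Y 0 1) = k) ∧
      (∃ k : ℤ, Y 0 1 * Y 1 1 = k) ∧ (∃ k : ℤ, Y 1 1 * Y 1 1 = k) := by
  have hNR : (N : ℝ) ≠ 0 := Nat.cast_ne_zero.2 hN.ne'
  obtain ⟨-, a, b, c, ha, hb, hc⟩ :=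
    hY !![1 / N, 0; 0, 0] ⟨rfl, 1, 0, 0, by simp, by simp, by simp⟩
  obtain ⟨-, a', b', c', ha', hb', hc'⟩ :=
    hY !![0, 0; 0, 1] ⟨rfl, 0, 0, 1, by simp, by simp, by simp⟩
  simp only [mul_mul_transpose_apply_fin_two, of_apply, cons_val', cons_val_zero, cons_val_one,
    empty_val', cons_val_fin_one, mul_zero, zero_mul, add_zero, zero_add, mul_one]
    at ha hb hc ha' hb' hc'
  refine ⟨⟨a, (div_left_inj' hNR).1 ?_⟩, ⟨b, ?_⟩, ⟨c, ?_⟩, ⟨a', ?_⟩, ⟨b', hb'⟩, ⟨c', hc'⟩⟩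
  · rw [← ha]; ring
  · rw [← hb]; ring
  · rw [← hc]; ring
  · rw [ha']; field_simp

/-- Multiply by `ad - bc = 1`: `ab = a² · bd - (ac/N) · Nb²`, similarly for `cd/N`, then `ad`. -/
theorem PreservesLatticeM.integrality_of_det_eq_one (hN : 0 < N) {Y : Matrix (Fin 2) (Fin 2) ℝ}
    (hY : PreservesLatticeM N Y) (hdet : Y.det = 1) :
    (∃ k : ℤ, Y 0 0 * Y 0 1 = k) ∧ (∃ k : ℤ, Y 1 0 * Y 1 1 / N = k) ∧
      (∃ k : ℤ, Y 0 0 * Y 1 1 = k) := by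
  have hNR : (N : ℝ) ≠ 0 := Nat.cast_ne_zero.2 hN.ne'
  obtain ⟨⟨α, hα⟩, ⟨q, hq⟩, ⟨γ, hγ⟩, ⟨β, hβ⟩, ⟨r, hr⟩, ⟨δ, hδ⟩⟩ := hY.integrality hN
  rw [det_fin_two] at hdet
  obtain ⟨p, hp⟩ : ∃ p : ℤ, Y 0 0 * Y 0 1 = p := ⟨α * r - q * β, by
    push_cast; rw [← hα, ← hq, ← hβ, ← hr]
    linear_combination (norm := (field_simp; ring)) (-(Y 0 0 * Y 0 1)) * hdet⟩
  obtain ⟨s, hs⟩ : ∃ s : ℤ, Y 1 0 * Y 1 1 / N = s := ⟨q * δ - γ * r, by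
    push_cast; rw [← hq, ← hδ, ← hγ, ← hr]
    linear_combination (norm := (field_simp; ring)) (-(Y 1 0 * Y 1 1 / N)) * hdet⟩
  refine ⟨⟨p, hp⟩, ⟨s, hs⟩, α * δ - N * p * s, ?_⟩
  push_cast; rw [← hα, ← hδ, ← hp, ← hs]
  linear_combination (norm := (field_simp; ring)) (-(Y 0 0 * Y 1 1)) * hdet

end Lattice

section AtkinLehner

variable {N : ℕ}

def latticeStabilizer (N : ℕ) : Subgroup (SpecialLinearGroup (Fin 2) ℝ) where
  carrier := {X | PreservesLatticeM N X.1 ∧ PreservesLatticeM N (X⁻¹).1}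
  one_mem' := by
    constructor <;> intro v hv <;> simpa using hv
  mul_mem' {X Y} hX hY := ⟨hX.1.mul hY.1, by
    rw [_root_.mul_inv_rev]; exact hY.2.mul hX.2⟩
  inv_mem' {X} hX := ⟨hX.2, by simpa only [inv_inv] using hX.1⟩

theorem preservesLatticeM_of_mem_atkinLehnerSet (hN : 0 < N)
    {X : SpecialLinearGroup (Fin 2) ℝ} (hX : X ∈ AtkinLehnerSet N) :
    PreservesLatticeM N X.1 := by
  obtain ⟨e, x, y, z, w, he, ⟨n, hn⟩, -, -, h00, h01, h10, h11⟩ := hX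
  rintro v ⟨hsym, A, B, C, hA, hB, hC⟩
  have hNR : (N : ℝ) ≠ 0 := Nat.cast_ne_zero.2 hN.ne'
  have heR : (0 : ℝ) < e := by exact_mod_cast he
  have hs0 : √(e : ℝ) ≠ 0 := (Real.sqrt_pos.2 heR).ne'
  have hs2 := Real.mul_self_sqrt heR.le
  generalize √(e : ℝ) = s at h00 h01 h10 h11 hs0 hs2
  have hNen : (N : ℝ) = s * s * n := by rw [hs2]; exact_mod_cast hn
  have hn0 : (n : ℝ) ≠ 0 := by rintro h; rw [h, mul_zero] at hNen; exact hNR hNen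
  refine ⟨?_, e * (x * x) * A + 2 * x * y * B * N + n * (y * y) * C,
    x * z * A + (e * (x * w) + n * (y * z)) * B + y * w * C,
    n * (z * z) * A + 2 * N * z * w * B + e * (w * w) * C, ?_, ?_, ?_⟩ <;>
  simp only [mul_mul_transpose_apply_fin_two, hsym]
  · ring
  all_goals
    simp only [h00, h01, h10, h11, hA, hB, hC]
    push_cast
    rw [hNen, ← hs2]
    field_simp
    ring

theorem inv_mem_atkinLehnerSet {X : SpecialLinearGroup (Fin 2) ℝ}
    (hX : X ∈ AtkinLehnerSet N) : X⁻¹ ∈ AtkinLehnerSet N := by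
  obtain ⟨e, x, y, z, w, he, hen, hcop, hrel, h00, h01, h10, h11⟩ := hX
  refine ⟨e, w, -y, -z, x, he, hen, hcop, by linear_combination hrel, ?_, ?_, ?_, ?_⟩ <;>
  all_goals
    rw [show (X⁻¹).1 = adjugate X.1 from rfl, adjugate_fin_two]
    simp [h00, h01, h10, h11, neg_div]

theorem gamma0InSLR_subset_atkinLehnerSet : Gamma0InSLR N ⊆ AtkinLehnerSet N := by
  rintro X ⟨a, b, _, d, ⟨z, rfl⟩, h00, h01, h10, h11⟩
  have hdet : a * d - b * (N * z) = 1 := by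
    have := X.2
    rw [det_fin_two, h00, h01, h10, h11] at this
    exact_mod_cast this
  refine ⟨1, a, b, z, d, one_pos, one_dvd _, isCoprime_one_left, ?_, ?_, ?_, ?_, ?_⟩ <;>
    simp only [h00, h01, h10, h11, Int.ediv_one, mul_one, one_mul, Int.cast_one, Real.sqrt_one,
      div_one]
  linear_combination hdet

theorem gamma0Star_le_latticeStabilizer (hN : 0 < N) : Gamma0Star N ≤ latticeStabilizer N := by
  have hAL : AtkinLehnerSet N ⊆ latticeStabilizer N := fun X hX =>
    ⟨preservesLatticeM_of_mem_atkinLehnerSet hN hX,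
      preservesLatticeM_of_mem_atkinLehnerSet hN (inv_mem_atkinLehnerSet hX)⟩
  exact (Subgroup.closure_le _).2
    (Set.union_subset (gamma0InSLR_subset_atkinLehnerSet.trans hAL) hAL)

end AtkinLehner

theorem Int.exists_dvd_eq_combination (p q m : ℤ) :
    ∃ x A E F : ℤ, x ∣ p ∧ x ∣ q ∧ x ∣ m ∧ x = p * A + q * E + m * F := by
  refine ⟨Int.gcd p (Int.gcd q m), Int.gcdA p (Int.gcd q m),
    Int.gcdB p (Int.gcd q m) * Int.gcdA q m, Int.gcdB p (Int.gcd q m) * Int.gcdB q m,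
    Int.gcd_dvd_left _ _, (Int.gcd_dvd_right _ _).trans (Int.gcd_dvd_left _ _),
    (Int.gcd_dvd_right _ _).trans (Int.gcd_dvd_right _ _), ?_⟩
  rw [Int.gcd_eq_gcd_ab, Int.gcd_eq_gcd_ab q m]
  ring

theorem dvd_of_dvd_mul_of_combination_eq_one {d c y z k A E F : ℤ}
    (h : y * A + z * E + k * F = 1) (hy : d ∣ c * y) (hz : d ∣ c * z) (hk : d ∣ c * k) :
    d ∣ c := by
  have hc : c = c * y * A + c * z * E + c * k * F := by linear_combination (-c) * h
  rw [hc]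
  exact dvd_add (dvd_add (hy.mul_right A) (hz.mul_right E)) (hk.mul_right F)

/-- Applied to `α, p, q, m = a², ab, ac/N, ad`; `x` is `gcd(p, q, m)`. -/
theorem exists_atkinLehner_data {n α p q m : ℤ} (hα : 0 < α)
    (hpm : α ∣ p * m) (hqm : α ∣ q * m) (hmm : α ∣ m * m)
    (hpp : α ∣ n * (p * p)) (hqq : α ∣ n * (q * q))
    (hdet : α * (m - 1) = n * (p * q)) :
    ∃ e x y z w : ℤ, 0 < e ∧ e ∣ n ∧ α = e * (x * x) ∧ p = x * y ∧ q = x * z ∧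
      m = e * x * w ∧ x * w * e - y * z * (n / e) = 1 := by
  obtain ⟨x, A, E, F, ⟨y, rfl⟩, ⟨z, rfl⟩, ⟨k, rfl⟩, hx⟩ := Int.exists_dvd_eq_combination p q m
  have hx0 : x ≠ 0 := by rintro rfl; linarith
  have hxx : x * x ≠ 0 := mul_ne_zero hx0 hx0
  have hprim : y * A + z * E + k * F = 1 :=
    mul_left_cancel₀ hx0 (by linear_combination -hx)
  have hcop : IsCoprime x (x * k - 1) := ⟨k, -1, by ring⟩
  obtain ⟨e, rfl⟩ : x * x ∣ α := by
    refine (hcop.mul_left hcop).dvd_of_dvd_mul_right ⟨n * (y * z), ?_⟩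
    rw [hdet]; ring
  have he : 0 < e := pos_of_mul_pos_right hα (mul_self_nonneg x)
  have cancel : ∀ {s t : ℤ}, x * x * e ∣ s → s = x * x * t → e ∣ t := fun h hs =>
    (mul_dvd_mul_iff_left hxx).1 (hs ▸ h)
  have hyk : e ∣ k * y := cancel hpm (by ring)
  have hzk : e ∣ k * z := cancel hqm (by ring)
  have hkk : e ∣ k * k := cancel hmm (by ring)
  have hyy : e ∣ n * y * y := cancel hpp (by ring)
  have hzz : e ∣ n * z * z := cancel hqq (by ring)
  have hyz : e * (x * k - 1) = n * (y * z) := mul_left_cancel₀ hxx (by linear_combination hdet)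
  have hnyz : e ∣ n * y * z := ⟨x * k - 1, by linear_combination -hyz⟩
  have hen : e ∣ n := by
    refine dvd_of_dvd_mul_of_combination_eq_one hprim
      (dvd_of_dvd_mul_of_combination_eq_one hprim hyy ?_ ?_)
      (dvd_of_dvd_mul_of_combination_eq_one hprim ?_ hzz ?_)
      (dvd_of_dvd_mul_of_combination_eq_one hprim ?_ ?_ ?_)
    exacts [hnyz, hyk.trans ⟨n, by ring⟩, hnyz.trans ⟨1, by ring⟩, hzk.trans ⟨n, by ring⟩,
      hyk.trans ⟨n, by ring⟩, hzk.trans ⟨n, by ring⟩, hkk.trans ⟨n, by ring⟩]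
  obtain ⟨w, rfl⟩ : e ∣ k := dvd_of_dvd_mul_of_combination_eq_one hprim hyk hzk hkk
  obtain ⟨n', rfl⟩ := hen
  refine ⟨e, x, y, z, w, he, dvd_mul_right e n', by ring, by ring, by ring, by ring, ?_⟩
  rw [Int.mul_ediv_cancel_left _ he.ne']
  exact mul_left_cancel₀ he.ne' (by linear_combination hyz)

section Reconstruction

variable {N : ℕ}

theorem mem_atkinLehnerSet_of_entries {X : SpecialLinearGroup (Fin 2) ℝ} {e x y z w : ℤ}
    (he : 0 < e) (heN : e ∣ N) (hrel : x * w * e - y * z * (N / e) = 1)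
    (ha : X.1 0 0 = x * √e) (ha0 : X.1 0 0 ≠ 0) (hb : X.1 0 0 * X.1 0 1 = x * y)
    (hc : X.1 0 0 * X.1 1 0 = N * (x * z)) (hd : X.1 0 0 * X.1 1 1 = e * x * w) :
    X ∈ AtkinLehnerSet N := by
  have heR : (0 : ℝ) < e := by exact_mod_cast he
  have hs0 : √(e : ℝ) ≠ 0 := (Real.sqrt_pos.2 heR).ne'
  have hxR : (x : ℝ) ≠ 0 := left_ne_zero_of_mul (ha ▸ ha0)
  refine ⟨e, x, y, z, w, he, heN, ⟨x * w, -(y * z), by linear_combination hrel⟩, hrel,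
    ?_, ?_, ?_, ?_⟩ <;>
  rw [eq_div_iff hs0] <;> push_cast
  · rw [ha, mul_assoc, Real.mul_self_sqrt heR.le]; ring
  all_goals refine mul_left_cancel₀ hxR ?_
  · linear_combination hb - X.1 0 1 * ha
  · linear_combination hc - X.1 1 0 * ha
  · linear_combination hd - X.1 1 1 * ha

theorem mem_atkinLehnerSet_of_mul_self_entries {X : SpecialLinearGroup (Fin 2) ℝ}
    {e x y z w : ℤ} (he : 0 < e) (heN : e ∣ N) (hrel : x * w * e - y * z * (N / e) = 1)
    (ha : X.1 0 0 * X.1 0 0 = e * (x * x)) (ha0 : X.1 0 0 ≠ 0) (hb : X.1 0 0 * X.1 0 1 = x * y)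
    (hc : X.1 0 0 * X.1 1 0 = N * (x * z)) (hd : X.1 0 0 * X.1 1 1 = e * x * w) :
    X ∈ AtkinLehnerSet N := by
  have hsign : (X.1 0 0 - x * √e) * (X.1 0 0 + x * √e) = 0 := by
    have heR : (0 : ℝ) ≤ e := by exact_mod_cast he.le
    linear_combination ha - (x * x : ℝ) * Real.mul_self_sqrt heR
  rcases mul_eq_zero.1 hsign with h | h
  · exact mem_atkinLehnerSet_of_entries he heN hrel (by linear_combination h) ha0 hb hc hd
  · exact mem_atkinLehnerSet_of_entries (x := -x) (y := -y) (z := -z) (w := -w) he heN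
      (by linear_combination hrel) (by push_cast; linear_combination h) ha0
      (by push_cast; linear_combination hb) (by push_cast; linear_combination hc)
      (by push_cast; linear_combination hd)

theorem mem_atkinLehnerSet_of_preservesLatticeM (hN : 0 < N) {X : SpecialLinearGroup (Fin 2) ℝ}
    (hX : PreservesLatticeM N X.1) (ha0 : X.1 0 0 ≠ 0) : X ∈ AtkinLehnerSet N := by
  have hNR : (N : ℝ) ≠ 0 := Nat.cast_ne_zero.2 hN.ne'
  obtain ⟨⟨α, hα⟩, ⟨q, hq⟩, ⟨γ, hγ⟩, ⟨β, hβ⟩, ⟨r, hr⟩, ⟨δ, hδ⟩⟩ := hX.integrality hN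
  obtain ⟨⟨p, hp⟩, ⟨s, hs⟩, ⟨m, hm⟩⟩ := hX.integrality_of_det_eq_one hN X.2
  have hdet : X.1 0 0 * X.1 1 1 - X.1 0 1 * X.1 1 0 = 1 := by rw [← det_fin_two]; exact X.2
  have hαpos : 0 < α := by exact_mod_cast (hα ▸ mul_self_pos.2 ha0 : (0 : ℝ) < α)
  obtain ⟨e, x, y, z, w, he, heN, hαe, rfl, rfl, rfl, hrel⟩ := exists_atkinLehner_data hαpos
    (n := N) (p := p) (q := q) (m := m)
    ⟨r, by exact_mod_cast (show (p : ℝ) * m = α * r by rw [← hp, ← hm, ← hα, ← hr]; ring)⟩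
    ⟨s, by exact_mod_cast (show (q : ℝ) * m = α * s by rw [← hq, ← hm, ← hα, ← hs]; ring)⟩
    ⟨δ, by exact_mod_cast (show (m : ℝ) * m = α * δ by rw [← hm, ← hα, ← hδ]; ring)⟩
    ⟨β, by exact_mod_cast (show (N : ℝ) * (p * p) = α * β by rw [← hp, ← hα, ← hβ]; ring)⟩
    ⟨γ, by exact_mod_cast (show (N : ℝ) * (q * q) = α * γ by
      rw [← hq, ← hα, ← hγ]; field_simp)⟩
    (by exact_mod_cast (show (α : ℝ) * (m - 1) = N * (p * q) by
      rw [← hα, ← hm, ← hp, ← hq]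
      linear_combination (norm := (field_simp; ring)) (X.1 0 0 * X.1 0 0) * hdet))
  push_cast at hp hq hm
  exact mem_atkinLehnerSet_of_mul_self_entries he heN hrel (by rw [hα]; exact_mod_cast hαe) ha0
    hp (by rw [← hq, mul_div_cancel₀ _ hNR]) hm

end Reconstruction

theorem mem_gamma0Star_of_preservesLatticeM {N : ℕ} (hN : 0 < N)
    {X : SpecialLinearGroup (Fin 2) ℝ} (hX : PreservesLatticeM N X.1) : X ∈ Gamma0Star N := by
  have mem_of_ne_zero : ∀ {Y : SpecialLinearGroup (Fin 2) ℝ}, PreservesLatticeM N Y.1 →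
      Y.1 0 0 ≠ 0 → Y ∈ Gamma0Star N := fun hY hY0 =>
    Subgroup.subset_closure (Or.inr (mem_atkinLehnerSet_of_preservesLatticeM hN hY hY0))
  by_cases ha : X.1 0 0 = 0
  · -- then `bc = -1`, so `T = (1 1; 0 1) ∈ Γ₀(N)` moves `X` to an element with `(T X)₀₀ = c ≠ 0`
    let T : SpecialLinearGroup (Fin 2) ℝ := ⟨!![1, 1; 0, 1], by simp⟩
    have hT : T ∈ Gamma0InSLR N :=
      ⟨1, 1, 0, 1, dvd_zero _, by simp [T], by simp [T], by simp [T], by simp [T]⟩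
    have hc : X.1 1 0 ≠ 0 := by
      have hdet := X.2
      rw [det_fin_two, ha] at hdet
      rintro hc; simp [hc] at hdet
    have hTX : T * X ∈ Gamma0Star N := mem_of_ne_zero
      ((preservesLatticeM_of_mem_atkinLehnerSet hN (gamma0InSLR_subset_atkinLehnerSet hT)).mul hX)
      (show ((!![1, 1; 0, 1] : Matrix (Fin 2) (Fin 2) ℝ) * X.1) 0 0 ≠ 0 by
        simpa [mul_apply, Fin.sum_univ_two, ha] using hc)
    simpa using (Gamma0Star N).mul_mem
      ((Gamma0Star N).inv_mem (Subgroup.subset_closure (Or.inl hT))) hTX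
  · exact mem_of_ne_zero hX ha

/-- **The special orthogonal group of the lattice `M` is `Γ₀(N)*`.**
An element `X ∈ SL₂(ℝ)`, acting on symmetric matrices by `v ↦ XvXᵗ` (an orthogonal
transformation for the form `(v,v) = −2N·det v`), preserves the lattice `M` if and
only if `X` lies in the extension `Γ₀(N)*` of `Γ₀(N)` by all Atkin–Lehner
involutions. -/
theorem specialOrthogonalGroup_eq_Gamma0Star (N : ℕ) (hN : 0 < N)
    (X : Matrix.SpecialLinearGroup (Fin 2) ℝ) :
    ((∀ v ∈ LatticeM N, X.1 * v * X.1.transpose ∈ LatticeM N) ∧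
      (∀ v ∈ LatticeM N, (X⁻¹).1 * v * (X⁻¹).1.transpose ∈ LatticeM N)) ↔
    X ∈ Gamma0Star N :=
  ⟨fun h => mem_gamma0Star_of_preservesLatticeM hN h.1,
    fun h => gamma0Star_le_latticeStabilizer hN h⟩
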